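/- Let ρ be the canonical two-qubit state with parameters mx, my, mz, m'x, m'y, m'z, Cxx, Cyy, Czz, assumed positive semidefinite, and assume Re(trace ρ₊) ≠ 0 and Re(trace ρ₋) ≠ 0. Then for Bob's σy measurement, P₊(Π_y) − P₋(Π_y) = 2·(Cyy − my·m'y)·(−3 + cos(2α))·sin α / ((−3 + cos(2α) + 4·my·sin α)·(1 + 2·my·sin α + sin²α)). In particular the difference vanishes whenever Cyy = my·m'y, and in particular whenever Cyy = 0 and my = 0. -/

import Mathlib

open Matrix Kronecker Complex
open scoped ComplexOrder

noncomputable section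

/-- Pauli matrix `σx`. -/
def σx : Matrix (Fin 2) (Fin 2) ℂ := !![0, 1; 1, 0]

/-- Pauli matrix `σy`. -/
def σy : Matrix (Fin 2) (Fin 2) ℂ := !![0, -Complex.I; Complex.I, 0]

/-- Pauli matrix `σz`. -/
def σz : Matrix (Fin 2) (Fin 2) ℂ := !![1, 0; 0, -1]

/-- The simulated PT-symmetric evolution operator at the chosen time. -/
def Upt (α : ℝ) : Matrix (Fin 2) (Fin 2) ℂ :=
  !![(Real.sin α : ℂ), -Complex.I; -Complex.I, -(Real.sin α : ℂ)]

/-- Alice's operation `A₊` (do nothing). -/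
def Apos : Matrix (Fin 2) (Fin 2) ℂ := 1

/-- Alice's operation `A₋` (bit flip `σx`). -/
def Aneg : Matrix (Fin 2) (Fin 2) ℂ := σx

/-- Unnormalized post-selected state after Alice applies `A₊` followed by the
simulated PT evolution. -/
def postPlus (α : ℝ) (ρ : Matrix (Fin 2 × Fin 2) (Fin 2 × Fin 2) ℂ) :
    Matrix (Fin 2 × Fin 2) (Fin 2 × Fin 2) ℂ :=
  ((Upt α * Apos) ⊗ₖ (1 : Matrix (Fin 2) (Fin 2) ℂ)) * ρ *
    ((Upt α * Apos) ⊗ₖ (1 : Matrix (Fin 2) (Fin 2) ℂ))ᴴ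

/-- Unnormalized post-selected state after Alice applies `A₋` followed by the
simulated PT evolution. -/
def postMinus (α : ℝ) (ρ : Matrix (Fin 2 × Fin 2) (Fin 2 × Fin 2) ℂ) :
    Matrix (Fin 2 × Fin 2) (Fin 2 × Fin 2) ℂ :=
  ((Upt α * Aneg) ⊗ₖ (1 : Matrix (Fin 2) (Fin 2) ℂ)) * ρ *
    ((Upt α * Aneg) ⊗ₖ (1 : Matrix (Fin 2) (Fin 2) ℂ))ᴴ

/-- Probability that Bob obtains outcome `Π` given Alice applied `A₊`. -/
def Pplus (α : ℝ) (ρ : Matrix (Fin 2 × Fin 2) (Fin 2 × Fin 2) ℂ)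
    (Pi : Matrix (Fin 2) (Fin 2) ℂ) : ℝ :=
  ((((1 : Matrix (Fin 2) (Fin 2) ℂ) ⊗ₖ Pi) * postPlus α ρ).trace).re /
    ((postPlus α ρ).trace).re

/-- Probability that Bob obtains outcome `Π` given Alice applied `A₋`. -/
def Pminus (α : ℝ) (ρ : Matrix (Fin 2 × Fin 2) (Fin 2 × Fin 2) ℂ)
    (Pi : Matrix (Fin 2) (Fin 2) ℂ) : ℝ :=
  ((((1 : Matrix (Fin 2) (Fin 2) ℂ) ⊗ₖ Pi) * postMinus α ρ).trace).re /
    ((postMinus α ρ).trace).re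

/-- Bob's `σy`-measurement projector onto `|+_y⟩ = (|0⟩ + i|1⟩)/√2`. -/
def Piy : Matrix (Fin 2) (Fin 2) ℂ :=
  (1/2 : ℂ) • !![1, -Complex.I; Complex.I, 1]

/-- Bob's rank-one projector `Π(z,u)` for an arbitrary projective measurement. -/
def Pizu (z u : ℝ) : Matrix (Fin 2) (Fin 2) ℂ :=
  !![((Real.cos (z/2))^2 : ℂ),
     (Real.cos (z/2) : ℂ) * (Real.sin (z/2) : ℂ) * Complex.exp (-(Complex.I * u));
     (Real.cos (z/2) : ℂ) * (Real.sin (z/2) : ℂ) * Complex.exp (Complex.I * u),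
     ((Real.sin (z/2))^2 : ℂ)]

/-- The single-qubit state `|+⟩ = (|0⟩ + |1⟩)/√2`. -/
def ketPlus : Fin 2 → ℂ := ![((1 / Real.sqrt 2 : ℝ) : ℂ), ((1 / Real.sqrt 2 : ℝ) : ℂ)]

/-- The single-qubit state `|−⟩ = (|0⟩ − |1⟩)/√2`. -/
def ketMinus : Fin 2 → ℂ := ![((1 / Real.sqrt 2 : ℝ) : ℂ), ((-(1 / Real.sqrt 2) : ℝ) : ℂ)]

/-- The (normalized) pure state `|ψ_{β,γ}⟩ = (β|++⟩ + γ|−−⟩)/√(β²+γ²)`. -/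
def ψpure (β γ : ℝ) : Fin 2 × Fin 2 → ℂ := fun q =>
  ((β : ℂ) * (ketPlus q.1 * ketPlus q.2) + (γ : ℂ) * (ketMinus q.1 * ketMinus q.2)) /
    ((Real.sqrt (β^2 + γ^2) : ℝ) : ℂ)

/-- The pure two-qubit density matrix `ρ_{β,γ} = |ψ_{β,γ}⟩⟨ψ_{β,γ}|`. -/
def ρpure (β γ : ℝ) : Matrix (Fin 2 × Fin 2) (Fin 2 × Fin 2) ℂ :=
  Matrix.vecMulVec (ψpure β γ) (fun q => starRingEnd ℂ (ψpure β γ q))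

/-- The maximally entangled state `|ψ⁺⟩ = (|00⟩ + |11⟩)/√2`. -/
def ψmax : Fin 2 × Fin 2 → ℂ := fun q =>
  if q.1 = q.2 then ((1 / Real.sqrt 2 : ℝ) : ℂ) else 0

/-- The two-qubit Werner state `ρ_W(p) = p |ψ⁺⟩⟨ψ⁺| + ((1-p)/4) 1`. -/
def ρWerner (p : ℝ) : Matrix (Fin 2 × Fin 2) (Fin 2 × Fin 2) ℂ :=
  (p : ℂ) • Matrix.vecMulVec ψmax (fun q => starRingEnd ℂ (ψmax q)) +
    (((1 - p) / 4 : ℝ) : ℂ) • 1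

/-- The canonical two-qubit state with magnetizations `mx my mz` (Alice),
`nx ny nz` (Bob) and diagonal correlators `Cxx Cyy Czz`. -/
def ρcan (mx my mz nx ny nz Cxx Cyy Czz : ℝ) :
    Matrix (Fin 2 × Fin 2) (Fin 2 × Fin 2) ℂ :=
  (1/4 : ℂ) • ((1 : Matrix (Fin 2 × Fin 2) (Fin 2 × Fin 2) ℂ)
    + (mx : ℂ) • (σx ⊗ₖ (1 : Matrix (Fin 2) (Fin 2) ℂ))
    + (my : ℂ) • (σy ⊗ₖ (1 : Matrix (Fin 2) (Fin 2) ℂ))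
    + (mz : ℂ) • (σz ⊗ₖ (1 : Matrix (Fin 2) (Fin 2) ℂ))
    + (nx : ℂ) • ((1 : Matrix (Fin 2) (Fin 2) ℂ) ⊗ₖ σx)
    + (ny : ℂ) • ((1 : Matrix (Fin 2) (Fin 2) ℂ) ⊗ₖ σy)
    + (nz : ℂ) • ((1 : Matrix (Fin 2) (Fin 2) ℂ) ⊗ₖ σz)
    + (Cxx : ℂ) • (σx ⊗ₖ σx)
    + (Cyy : ℂ) • (σy ⊗ₖ σy)
    + (Czz : ℂ) • (σz ⊗ₖ σz))

/-- Bob's reduced matrix: the partial trace over Alice's subsystem. -/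
def ptraceA (X : Matrix (Fin 2 × Fin 2) (Fin 2 × Fin 2) ℂ) :
    Matrix (Fin 2) (Fin 2) ℂ :=
  Matrix.of fun i j => ∑ k : Fin 2, X (k, i) (k, j)

/-- The trace distance `T(A,B) = (1/2) tr √((A-B)ᴴ (A-B))`, where the square
root is the positive semidefinite square root. -/
def psdSqrt {n : Type*} [Fintype n] [DecidableEq n] {M : Matrix n n ℂ}
    (hM : M.PosSemidef) : Matrix n n ℂ :=
  (hM.isHermitian.eigenvectorUnitary : Matrix n n ℂ) *
    diagonal ((↑) ∘ (√·) ∘ hM.isHermitian.eigenvalues) *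
    (star hM.isHermitian.eigenvectorUnitary : Matrix n n ℂ)

def traceDist (A B : Matrix (Fin 2) (Fin 2) ℂ) : ℝ :=
  (1/2) * ((psdSqrt (Matrix.posSemidef_conjTranspose_mul_self (A - B))).trace).re

/-!
Conjugating by `K ⊗ 1` and cycling the trace turns every quantity into the expectation of
`(Kᴴ K) ⊗ Π` in `ρ`. For both of Alice's operations `Kᴴ K = (1 + s²) 1 + 2 s σy` with
`s = ± sin α`, and `Π_y = (1 + σy) / 2`, so only the expectations `1, my, m'y, Cyy` of the
canonical state enter. The two conditional probabilities are therefore the same rational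
function of `s` evaluated at `± sin α`, and their difference is an algebraic identity once
`cos 2α = 1 - 2 sin² α`.
-/

theorem trace_one_kronecker_mul_conj {m n R : Type*} [Fintype m] [DecidableEq m] [Fintype n]
    [DecidableEq n] [CommRing R] [StarRing R] (K : Matrix m m R) (P : Matrix n n R)
    (ρ : Matrix (m × n) (m × n) R) :
    ((1 ⊗ₖ P) * ((K ⊗ₖ 1) * ρ * (K ⊗ₖ 1)ᴴ)).trace = (((Kᴴ * K) ⊗ₖ P) * ρ).trace := by
  rw [conjTranspose_kronecker, conjTranspose_one, ← Matrix.mul_assoc, ← Matrix.mul_assoc,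
    trace_mul_cycle, ← Matrix.mul_assoc, ← mul_kronecker_mul, ← mul_kronecker_mul,
    Matrix.mul_one, Matrix.one_mul, Matrix.mul_one]

/-- The effect `Kᴴ * K` of Alice's operation followed by the PT evolution, at `s = ± sin α`. -/
def effect (s : ℝ) : Matrix (Fin 2) (Fin 2) ℂ :=
  ((1 + s ^ 2 : ℝ) : ℂ) • 1 + ((2 * s : ℝ) : ℂ) • σy

theorem effect_eq (s : ℝ) :
    effect s = !![1 + (s : ℂ) ^ 2, -(2 * s * I); 2 * s * I, 1 + (s : ℂ) ^ 2] := by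
  ext i j
  fin_cases i <;> fin_cases j <;> simp [effect, σy]

theorem conjTranspose_Upt_mul_self (α : ℝ) : (Upt α)ᴴ * Upt α = effect (Real.sin α) := by
  rw [effect_eq, Upt]
  generalize Real.sin α = s
  ext i j
  fin_cases i <;> fin_cases j <;> simp [Matrix.mul_apply, Fin.sum_univ_two] <;> ring

theorem σx_mul_effect_mul_σx (s : ℝ) : σx * effect s * σx = effect (-s) := by
  ext i j
  fin_cases i <;> fin_cases j <;> simp [effect_eq, σx, Matrix.mul_apply, Fin.sum_univ_two]

theorem conjTranspose_σx : σxᴴ = σx := by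
  ext i j
  fin_cases i <;> fin_cases j <;> simp [σx]

theorem conjTranspose_mul_self_Upt_mul_Apos (α : ℝ) :
    (Upt α * Apos)ᴴ * (Upt α * Apos) = effect (Real.sin α) := by
  rw [Apos, Matrix.mul_one, conjTranspose_Upt_mul_self]

theorem conjTranspose_mul_self_Upt_mul_Aneg (α : ℝ) :
    (Upt α * Aneg)ᴴ * (Upt α * Aneg) = effect (-Real.sin α) := by
  rw [Aneg, conjTranspose_mul, conjTranspose_σx, Matrix.mul_assoc, ← Matrix.mul_assoc _ (Upt α),
    conjTranspose_Upt_mul_self, ← Matrix.mul_assoc, σx_mul_effect_mul_σx]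

theorem Piy_eq : Piy = ((1 / 2 : ℝ) : ℂ) • 1 + ((1 / 2 : ℝ) : ℂ) • σy := by
  ext i j
  fin_cases i <;> fin_cases j <;> simp [Piy, σy]

section CanonicalState

variable (mx my mz nx ny nz Cxx Cyy Czz : ℝ)

theorem trace_kronecker_mul_ρcan (a b c d : ℝ) :
    ((((a : ℂ) • 1 + (b : ℂ) • σy) ⊗ₖ ((c : ℂ) • 1 + (d : ℂ) • σy)) *
      ρcan mx my mz nx ny nz Cxx Cyy Czz).trace =
      ((a * c + b * c * my + a * d * ny + b * d * Cyy : ℝ) : ℂ) := by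
  simp only [ρcan, σx, σy, σz, Matrix.trace, Matrix.diag, Matrix.mul_apply,
    Matrix.kroneckerMap_apply, Matrix.smul_apply, Matrix.add_apply,
    Matrix.one_apply, Fintype.sum_prod_type, Fin.sum_univ_two]
  apply Complex.ext <;> simp <;> ring

variable {K : Matrix (Fin 2) (Fin 2) ℂ} {s : ℝ}

theorem re_trace_one_kronecker_mul_conj_ρcan (hK : Kᴴ * K = effect s) (c d : ℝ) :
    ((1 ⊗ₖ ((c : ℂ) • 1 + (d : ℂ) • σy)) *
      ((K ⊗ₖ 1) * ρcan mx my mz nx ny nz Cxx Cyy Czz * (K ⊗ₖ 1)ᴴ)).trace.re =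
      (1 + s ^ 2) * c + 2 * s * c * my + (1 + s ^ 2) * d * ny + 2 * s * d * Cyy := by
  rw [trace_one_kronecker_mul_conj, hK, effect, trace_kronecker_mul_ρcan, ofReal_re]

theorem re_trace_conj_ρcan (hK : Kᴴ * K = effect s) :
    ((K ⊗ₖ 1) * ρcan mx my mz nx ny nz Cxx Cyy Czz * (K ⊗ₖ 1)ᴴ).trace.re =
      1 + s ^ 2 + 2 * s * my := by
  have h := re_trace_one_kronecker_mul_conj_ρcan mx my mz nx ny nz Cxx Cyy Czz hK 1 0
  simp only [ofReal_one, ofReal_zero, one_smul, zero_smul, add_zero, one_kronecker_one,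
    Matrix.one_mul] at h
  rw [h]
  ring

/-- Bob's probability of finding `|+_y⟩` when Alice's post-selection has effect `effect s`. -/
def bobProbY (my ny Cyy s : ℝ) : ℝ :=
  (1 + s ^ 2 + 2 * s * my + (1 + s ^ 2) * ny + 2 * s * Cyy) / 2 / (1 + s ^ 2 + 2 * s * my)

theorem prob_Piy_conj_ρcan (hK : Kᴴ * K = effect s) :
    ((1 ⊗ₖ Piy) * ((K ⊗ₖ 1) * ρcan mx my mz nx ny nz Cxx Cyy Czz * (K ⊗ₖ 1)ᴴ)).trace.re /
      ((K ⊗ₖ 1) * ρcan mx my mz nx ny nz Cxx Cyy Czz * (K ⊗ₖ 1)ᴴ).trace.re =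
      bobProbY my ny Cyy s := by
  rw [Piy_eq, re_trace_one_kronecker_mul_conj_ρcan _ _ _ _ _ _ _ _ _ hK,
    re_trace_conj_ρcan _ _ _ _ _ _ _ _ _ hK, bobProbY]
  ring

theorem Pplus_ρcan_Piy (α : ℝ) :
    Pplus α (ρcan mx my mz nx ny nz Cxx Cyy Czz) Piy = bobProbY my ny Cyy (Real.sin α) :=
  prob_Piy_conj_ρcan mx my mz nx ny nz Cxx Cyy Czz (conjTranspose_mul_self_Upt_mul_Apos α)

theorem Pminus_ρcan_Piy (α : ℝ) :
    Pminus α (ρcan mx my mz nx ny nz Cxx Cyy Czz) Piy = bobProbY my ny Cyy (-Real.sin α) :=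
  prob_Piy_conj_ρcan mx my mz nx ny nz Cxx Cyy Czz (conjTranspose_mul_self_Upt_mul_Aneg α)

theorem re_trace_postPlus_ρcan (α : ℝ) :
    (postPlus α (ρcan mx my mz nx ny nz Cxx Cyy Czz)).trace.re =
      1 + Real.sin α ^ 2 + 2 * Real.sin α * my :=
  re_trace_conj_ρcan mx my mz nx ny nz Cxx Cyy Czz (conjTranspose_mul_self_Upt_mul_Apos α)

theorem re_trace_postMinus_ρcan (α : ℝ) :
    (postMinus α (ρcan mx my mz nx ny nz Cxx Cyy Czz)).trace.re =
      1 + Real.sin α ^ 2 - 2 * Real.sin α * my := by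
  rw [postMinus,
    re_trace_conj_ρcan mx my mz nx ny nz Cxx Cyy Czz (conjTranspose_mul_self_Upt_mul_Aneg α)]
  ring

end CanonicalState

theorem bobProbY_sub_bobProbY_neg {my ny Cyy s : ℝ} (hplus : 1 + s ^ 2 + 2 * s * my ≠ 0)
    (hminus : 1 + s ^ 2 - 2 * s * my ≠ 0) :
    bobProbY my ny Cyy s - bobProbY my ny Cyy (-s) =
      2 * (Cyy - my * ny) * (-3 + (1 - 2 * s ^ 2)) * s /
        ((-3 + (1 - 2 * s ^ 2) + 4 * my * s) * (1 + 2 * my * s + s ^ 2)) := by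
  have hminus' : 1 + (-s) ^ 2 + 2 * -s * my ≠ 0 := by convert hminus using 1; ring
  have hminus'' : -3 + (1 - 2 * s ^ 2) + 4 * my * s ≠ 0 := by
    contrapose! hminus; linear_combination -hminus / 2
  have hplus' : 1 + 2 * my * s + s ^ 2 ≠ 0 := by convert hplus using 1; ring
  have hden := mul_ne_zero two_ne_zero hplus
  have hden' := mul_ne_zero two_ne_zero hminus'
  rw [bobProbY, bobProbY, div_div, div_div, div_sub_div _ _ hden hden',
    div_eq_div_iff (mul_ne_zero hden hden') (mul_ne_zero hminus'' hplus')]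
  ring

theorem stmt6_general (α mx my mz nx ny nz Cxx Cyy Czz : ℝ)
    (ρ : Matrix (Fin 2 × Fin 2) (Fin 2 × Fin 2) ℂ)
    (hρ : ρ = ρcan mx my mz nx ny nz Cxx Cyy Czz)
    (hplus : ((postPlus α ρ).trace).re ≠ 0)
    (hminus : ((postMinus α ρ).trace).re ≠ 0) :
    Pplus α ρ Piy - Pminus α ρ Piy =
      2 * (Cyy - my * ny) * (-3 + Real.cos (2*α)) * Real.sin α /
        ((-3 + Real.cos (2*α) + 4 * my * Real.sin α) *
          (1 + 2 * my * Real.sin α + (Real.sin α)^2)) ∧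
    (Cyy = my * ny → Pplus α ρ Piy - Pminus α ρ Piy = 0) ∧
    (Cyy = 0 → my = 0 → Pplus α ρ Piy - Pminus α ρ Piy = 0) := by
  subst hρ
  rw [re_trace_postPlus_ρcan] at hplus
  rw [re_trace_postMinus_ρcan] at hminus
  have hdiff := bobProbY_sub_bobProbY_neg (ny := ny) (Cyy := Cyy) hplus hminus
  rw [← Pplus_ρcan_Piy mx my mz nx ny nz Cxx Cyy Czz,
    ← Pminus_ρcan_Piy mx my mz nx ny nz Cxx Cyy Czz, ← Real.cos_two_mul_eq_one_sub] at hdiff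
  refine ⟨hdiff, fun h => ?_, fun h₁ h₂ => ?_⟩
  · rw [hdiff, h, sub_self]; simp
  · rw [hdiff, h₁, h₂]; simp

/-- For the canonical two-qubit state, Bob's `σy` outcome probabilities satisfy
`P₊(Π_y) − P₋(Π_y) = 2(Cyy − my m'y)(−3 + cos 2α) sin α /
((−3 + cos 2α + 4 my sin α)(1 + 2 my sin α + sin²α))`; in particular the
difference vanishes whenever `Cyy = my m'y`, hence whenever `Cyy = 0` and `my = 0`. -/
theorem stmt6 (α mx my mz nx ny nz Cxx Cyy Czz : ℝ)
    (ρ : Matrix (Fin 2 × Fin 2) (Fin 2 × Fin 2) ℂ)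
    (hρ : ρ = ρcan mx my mz nx ny nz Cxx Cyy Czz)
    (hpsd : ρ.PosSemidef)
    (hplus : ((postPlus α ρ).trace).re ≠ 0)
    (hminus : ((postMinus α ρ).trace).re ≠ 0) :
    Pplus α ρ Piy - Pminus α ρ Piy =
      2 * (Cyy - my * ny) * (-3 + Real.cos (2*α)) * Real.sin α /
        ((-3 + Real.cos (2*α) + 4 * my * Real.sin α) *
          (1 + 2 * my * Real.sin α + (Real.sin α)^2)) ∧
    (Cyy = my * ny → Pplus α ρ Piy - Pminus α ρ Piy = 0) ∧
    (Cyy = 0 → my = 0 → Pplus α ρ Piy - Pminus α ρ Piy = 0) :=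
  stmt6_general α mx my mz nx ny nz Cxx Cyy Czz ρ hρ hplus hminus
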